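/- For vector fields u, v ∈ H^1(D) on a bounded Lipschitz domain D ⊆ R^3 and a Lipschitz velocity field β, the integration-by-parts identity (L_β u, v)_D = (u, 𝓛_β v)_D + ⟨β·n, u·v⟩_{∂D} holds, where L_β u = -β × (∇ × u) + ∇(β · u), 𝓛_β v = ∇ × (β × v) - β (∇ · v), and n is the outward unit normal. -/

import Mathlib

/-!
For differentiable fields the product rules for `⬝ᵥ`, `⨯₃` and `•` reduce both sides of
`L_β u · v = u · 𝓛_β v + ∇ · ((u · v) β)` to the same polynomial in the values of `β, u, v` and
the entries of their Jacobians. Integrating this identity over `D` and applying the divergence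
theorem to the `C¹` flux `(u · v) β` produces the boundary term `(β · n) (u · v)`.
-/

open Matrix MeasureTheory

/-- Gradient of a scalar field on `ℝ³`. -/
noncomputable def vgrad (f : (Fin 3 → ℝ) → ℝ) (x : Fin 3 → ℝ) : Fin 3 → ℝ :=
  fun i => fderiv ℝ f x (Pi.single i 1)

/-- Curl of a vector field on `ℝ³`. -/
noncomputable def vcurl (F : (Fin 3 → ℝ) → (Fin 3 → ℝ)) (x : Fin 3 → ℝ) : Fin 3 → ℝ :=
  ![fderiv ℝ F x (Pi.single 1 1) 2 - fderiv ℝ F x (Pi.single 2 1) 1,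
    fderiv ℝ F x (Pi.single 2 1) 0 - fderiv ℝ F x (Pi.single 0 1) 2,
    fderiv ℝ F x (Pi.single 0 1) 1 - fderiv ℝ F x (Pi.single 1 1) 0]

/-- Divergence of a vector field on `ℝ³`. -/
noncomputable def vdiv (F : (Fin 3 → ℝ) → (Fin 3 → ℝ)) (x : Fin 3 → ℝ) : ℝ :=
  ∑ j, fderiv ℝ F x (Pi.single j 1) j

/-- The magnetic advection operator `L_β u = -β × (∇×u) + ∇(β·u)`. -/
noncomputable def magAdv (β u : (Fin 3 → ℝ) → (Fin 3 → ℝ)) (x : Fin 3 → ℝ) : Fin 3 → ℝ :=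
  -((β x) ⨯₃ (vcurl u x)) + vgrad (fun y => β y ⬝ᵥ u y) x

/-- The formal dual operator `𝓛_β v = ∇ × (β × v) - β (∇·v)`. -/
noncomputable def magAdvDual (β v : (Fin 3 → ℝ) → (Fin 3 → ℝ)) (x : Fin 3 → ℝ) : Fin 3 → ℝ :=
  vcurl (fun y => (β y) ⨯₃ (v y)) x - (vdiv v x) • β x

section Bilinear

variable {𝕜 : Type*} [NontriviallyNormedField 𝕜] [CompleteSpace 𝕜]
  {H E F G : Type*} [NormedAddCommGroup H] [NormedSpace 𝕜 H]
  [NormedAddCommGroup E] [NormedSpace 𝕜 E] [FiniteDimensional 𝕜 E]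
  [NormedAddCommGroup F] [NormedSpace 𝕜 F] [FiniteDimensional 𝕜 F]
  [NormedAddCommGroup G] [NormedSpace 𝕜 G]
  (B : E →ₗ[𝕜] F →ₗ[𝕜] G) {f : H → E} {g : H → F} {x : H}

theorem LinearMap.hasFDerivAt_bilinear (hf : DifferentiableAt 𝕜 f x)
    (hg : DifferentiableAt 𝕜 g x) :
    HasFDerivAt (fun y => B (f y) (g y))
      (B.toContinuousBilinearMap.precompR H (f x) (fderiv 𝕜 g x) +
        B.toContinuousBilinearMap.precompL H (fderiv 𝕜 f x) (g x)) x :=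
  B.toContinuousBilinearMap.hasFDerivAt_of_bilinear hf.hasFDerivAt hg.hasFDerivAt

theorem LinearMap.fderiv_bilinear_apply (hf : DifferentiableAt 𝕜 f x)
    (hg : DifferentiableAt 𝕜 g x) (w : H) :
    fderiv 𝕜 (fun y => B (f y) (g y)) x w =
      B (fderiv 𝕜 f x w) (g x) + B (f x) (fderiv 𝕜 g x w) := by
  rw [(B.hasFDerivAt_bilinear hf hg).fderiv]
  simp [add_comm]

theorem LinearMap.contDiff_bilinear {n : WithTop ℕ∞} (hf : ContDiff 𝕜 n f)
    (hg : ContDiff 𝕜 n g) : ContDiff 𝕜 n (fun y => B (f y) (g y)) :=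
  (B.toContinuousBilinearMap.contDiff.comp hf).clm_apply hg

end Bilinear

theorem Continuous.integrableOn_of_isBounded {X E : Type*} [MetricSpace X] [ProperSpace X]
    [MeasurableSpace X] [OpensMeasurableSpace X] {μ : Measure X} [IsFiniteMeasureOnCompacts μ]
    [NormedAddCommGroup E] {f : X → E} (hf : Continuous f) {s : Set X}
    (hs : Bornology.IsBounded s) : IntegrableOn f s μ :=
  (hf.continuousOn.integrableOn_compact hs.isCompact_closure).mono_set subset_closure

section VectorCalculus

variable {f g : (Fin 3 → ℝ) → Fin 3 → ℝ} {x : Fin 3 → ℝ}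

theorem DifferentiableAt.dotProduct (hf : DifferentiableAt ℝ f x)
    (hg : DifferentiableAt ℝ g x) :
    DifferentiableAt ℝ (fun y => f y ⬝ᵥ g y) x :=
  ((dotProductBilin ℝ ℝ).hasFDerivAt_bilinear hf hg).differentiableAt

theorem fderiv_dotProduct_apply (hf : DifferentiableAt ℝ f x) (hg : DifferentiableAt ℝ g x)
    (w : Fin 3 → ℝ) :
    fderiv ℝ (fun y => f y ⬝ᵥ g y) x w = fderiv ℝ f x w ⬝ᵥ g x + f x ⬝ᵥ fderiv ℝ g x w :=
  (dotProductBilin ℝ ℝ).fderiv_bilinear_apply hf hg w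

theorem fderiv_crossProduct_apply (hf : DifferentiableAt ℝ f x) (hg : DifferentiableAt ℝ g x)
    (w : Fin 3 → ℝ) :
    fderiv ℝ (fun y => f y ⨯₃ g y) x w = fderiv ℝ f x w ⨯₃ g x + f x ⨯₃ fderiv ℝ g x w :=
  crossProduct.fderiv_bilinear_apply hf hg w

theorem ContDiff.dotProduct {n : WithTop ℕ∞} (hf : ContDiff ℝ n f) (hg : ContDiff ℝ n g) :
    ContDiff ℝ n (fun y => f y ⬝ᵥ g y) :=
  (dotProductBilin ℝ ℝ).contDiff_bilinear hf hg

theorem ContDiff.crossProduct {n : WithTop ℕ∞} (hf : ContDiff ℝ n f) (hg : ContDiff ℝ n g) :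
    ContDiff ℝ n (fun y => f y ⨯₃ g y) :=
  _root_.crossProduct.contDiff_bilinear hf hg

theorem vgrad_dotProduct (hf : DifferentiableAt ℝ f x) (hg : DifferentiableAt ℝ g x) :
    vgrad (fun y => f y ⬝ᵥ g y) x =
      fun i => fderiv ℝ f x (Pi.single i 1) ⬝ᵥ g x + f x ⬝ᵥ fderiv ℝ g x (Pi.single i 1) :=
  funext fun _ => fderiv_dotProduct_apply hf hg _

theorem vdiv_smul {c : (Fin 3 → ℝ) → ℝ} (hc : DifferentiableAt ℝ c x)
    (hf : DifferentiableAt ℝ f x) :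
    vdiv (fun y => c y • f y) x = vgrad c x ⬝ᵥ f x + c x * vdiv f x := by
  simp [vdiv, vgrad, fderiv_fun_smul hc hf, dotProduct, Finset.mul_sum, ← Finset.sum_add_distrib,
    add_comm]

theorem magAdv_dotProduct_eq {β u v : (Fin 3 → ℝ) → Fin 3 → ℝ} (hβ : DifferentiableAt ℝ β x)
    (hu : DifferentiableAt ℝ u x) (hv : DifferentiableAt ℝ v x) :
    magAdv β u x ⬝ᵥ v x =
      u x ⬝ᵥ magAdvDual β v x + vdiv (fun y => (u y ⬝ᵥ v y) • β y) x := by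
  rw [vdiv_smul (hu.dotProduct hv) hβ]
  simp only [magAdv, magAdvDual, vgrad_dotProduct hβ hu, vgrad_dotProduct hu hv, vcurl,
    fderiv_crossProduct_apply hβ hv, vdiv]
  simp only [dotProduct, Fin.sum_univ_three, cross_apply, cons_val, cons_val_zero, cons_val_one,
    neg_cons, neg_sub, neg_empty, Pi.add_apply, Pi.sub_apply, Pi.smul_apply, smul_eq_mul]
  ring

theorem ContDiff.continuous_vdiv {F : (Fin 3 → ℝ) → Fin 3 → ℝ} (hF : ContDiff ℝ 1 F) :
    Continuous (vdiv F) := by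
  unfold vdiv; fun_prop

theorem ContDiff.continuous_vcurl {F : (Fin 3 → ℝ) → Fin 3 → ℝ} (hF : ContDiff ℝ 1 F) :
    Continuous (vcurl F) := by
  unfold vcurl
  refine continuous_pi fun i => ?_
  fin_cases i <;> fun_prop

theorem continuous_magAdvDual {β v : (Fin 3 → ℝ) → Fin 3 → ℝ} (hβ : ContDiff ℝ 1 β)
    (hv : ContDiff ℝ 1 v) :
    Continuous (magAdvDual β v) :=
  (hβ.crossProduct hv).continuous_vcurl.sub (hv.continuous_vdiv.smul hβ.continuous)

end VectorCalculus

/-- `σ` plays the surface measure on `∂D` and `n` the outward unit normal, tied to `D` by the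
divergence theorem `hdiv`. -/
theorem stmt_1_general (D : Set (Fin 3 → ℝ))
    (hDbd : Bornology.IsBounded D)
    (σ : Measure (Fin 3 → ℝ))
    (n : (Fin 3 → ℝ) → (Fin 3 → ℝ))
    (hdiv : ∀ F : (Fin 3 → ℝ) → (Fin 3 → ℝ), ContDiff ℝ 1 F →
      ∫ x in D, vdiv F x = ∫ x, F x ⬝ᵥ n x ∂σ)
    (β : (Fin 3 → ℝ) → (Fin 3 → ℝ))
    (hβ : ContDiff ℝ 1 β)
    (u v : (Fin 3 → ℝ) → (Fin 3 → ℝ)) (hu : ContDiff ℝ 1 u) (hv : ContDiff ℝ 1 v) :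
    ∫ x in D, magAdv β u x ⬝ᵥ v x =
      (∫ x in D, u x ⬝ᵥ magAdvDual β v x) +
        ∫ x, (β x ⬝ᵥ n x) * (u x ⬝ᵥ v x) ∂σ := by
  set Φ : (Fin 3 → ℝ) → Fin 3 → ℝ := fun y => (u y ⬝ᵥ v y) • β y with hΦ
  have hΦ_smooth : ContDiff ℝ 1 Φ := (hu.dotProduct hv).smul hβ
  have hpointwise (x : Fin 3 → ℝ) : magAdv β u x ⬝ᵥ v x = u x ⬝ᵥ magAdvDual β v x + vdiv Φ x :=
    magAdv_dotProduct_eq (hβ.differentiable one_ne_zero x) (hu.differentiable one_ne_zero x)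
      (hv.differentiable one_ne_zero x)
  calc ∫ x in D, magAdv β u x ⬝ᵥ v x
      = ∫ x in D, u x ⬝ᵥ magAdvDual β v x + vdiv Φ x := by simp_rw [hpointwise]
    _ = (∫ x in D, u x ⬝ᵥ magAdvDual β v x) + ∫ x in D, vdiv Φ x :=
        integral_add
          ((hu.continuous.dotProduct (continuous_magAdvDual hβ hv)).integrableOn_of_isBounded hDbd)
          (hΦ_smooth.continuous_vdiv.integrableOn_of_isBounded hDbd)
    _ = (∫ x in D, u x ⬝ᵥ magAdvDual β v x) + ∫ x, (β x ⬝ᵥ n x) * (u x ⬝ᵥ v x) ∂σ := by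
        simp_rw [hdiv Φ hΦ_smooth, hΦ, smul_dotProduct, smul_eq_mul, mul_comm]

/-- integration by parts `(L_β u, v)_D = (u, 𝓛_β v)_D + ⟨β·n, u·v⟩_{∂D}`
on a bounded Lipschitz domain `D ⊆ ℝ³` with outward unit normal `n` and surface measure
`σ` on `∂D`, for which the Gauss divergence theorem holds; `β` is a Lipschitz (and `C¹`)
velocity field, and `u, v` are (smooth representatives of) `H¹` vector fields. -/
theorem stmt_1 (D : Set (Fin 3 → ℝ)) (hD : MeasurableSet D)
    (hDbd : Bornology.IsBounded D)
    (σ : Measure (Fin 3 → ℝ)) [IsFiniteMeasure σ]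
    (n : (Fin 3 → ℝ) → (Fin 3 → ℝ))
    (hdiv : ∀ F : (Fin 3 → ℝ) → (Fin 3 → ℝ), ContDiff ℝ 1 F →
      ∫ x in D, vdiv F x = ∫ x, F x ⬝ᵥ n x ∂σ)
    (β : (Fin 3 → ℝ) → (Fin 3 → ℝ)) (L : NNReal)
    (hβ : ContDiff ℝ 1 β) (hβL : LipschitzWith L β)
    (u v : (Fin 3 → ℝ) → (Fin 3 → ℝ)) (hu : ContDiff ℝ 1 u) (hv : ContDiff ℝ 1 v) :
    ∫ x in D, magAdv β u x ⬝ᵥ v x =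
      (∫ x in D, u x ⬝ᵥ magAdvDual β v x) +
        ∫ x, (β x ⬝ᵥ n x) * (u x ⬝ᵥ v x) ∂σ :=
  stmt_1_general D hDbd σ n hdiv β hβ u v hu hv
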